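/- arXiv:2512.22914 — 4 statements merged into one kernel-verified Lean document; each statement's English description precedes it below -/
import Mathlib

section
/- Let n ≥ 1, let Σ ∈ ℝ^{n×n} be symmetric positive definite, let q, q' ∈ ℝ^n with q ≠ q', set μ = q − q', and let ε ≥ 0. Then for every Borel set S ⊆ ℝ^n, N(q, Σ)(S) ≤ e^ε · N(q', Σ)(S) + Q(ε/‖μ‖_{Σ⁻¹} − ‖μ‖_{Σ⁻¹}/2). -/
open MeasureTheory Matrix

/-- Density of the multivariate Gaussian `N(m, S)` on `ℝ^n`:
`u ↦ (2π)^{-n/2} (det S)^{-1/2} exp(-(1/2)(u-m)ᵀ S⁻¹ (u-m))`. -/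
noncomputable def gaussianPdf {n : ℕ} (m : Fin n → ℝ) (S : Matrix (Fin n) (Fin n) ℝ)
    (u : Fin n → ℝ) : ℝ :=
  (Real.sqrt ((2 * Real.pi) ^ n * S.det))⁻¹ *
    Real.exp (-(1 / 2) * ((u - m) ⬝ᵥ S⁻¹ *ᵥ (u - m)))

/-- The multivariate Gaussian measure `N(m, S)` on `ℝ^n`. -/
noncomputable def gaussianMeasure {n : ℕ} (m : Fin n → ℝ) (S : Matrix (Fin n) (Fin n) ℝ) :
    Measure (Fin n → ℝ) :=
  volume.withDensity fun u => ENNReal.ofReal (gaussianPdf m S u)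

/-- The Gaussian tail function `Q(x) = (1/√(2π)) ∫_x^∞ exp(-z²/2) dz`. -/
noncomputable def gaussQ (x : ℝ) : ℝ :=
  (Real.sqrt (2 * Real.pi))⁻¹ * ∫ z in Set.Ioi x, Real.exp (-z ^ 2 / 2)

/-! The privacy loss `log (p_q / p_{q'})(u) = μᵀΣ⁻¹(u - q) + ‖μ‖²/2`, with `‖μ‖ = ‖μ‖_{Σ⁻¹}`,
is affine in `u`, so it exceeds `ε` only on a half-space `B`; hence
`N(q, Σ)(S) ≤ e^ε N(q', Σ)(S) + N(q, Σ)(B)`. Writing `N(q, Σ)` as the image of the standard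
Gaussian under `x ↦ q + Σ^{1/2} x` identifies it with Mathlib's `multivariateGaussian`, under
which the linear statistic `μᵀΣ⁻¹(u - q)` is `N(0, ‖μ‖²)`; so `N(q, Σ)(B)` is the Gaussian tail
`Q(ε/‖μ‖ - ‖μ‖/2)`. -/

open scoped ENNReal
open ProbabilityTheory

theorem map_withDensity_comp {α β : Type*} [MeasurableSpace α] [MeasurableSpace β]
    {μ : Measure α} {g : α → β} (hg : Measurable g) {f : β → ℝ≥0∞} (hf : Measurable f) :
    (μ.withDensity (f ∘ g)).map g = (μ.map g).withDensity f := by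
  ext s hs
  rw [Measure.map_apply hg hs, withDensity_apply _ (hg hs), withDensity_apply _ hs,
    setLIntegral_map hs hf hg, Function.comp_def]

theorem withDensity_apply_le_mul_add {α : Type*} [MeasurableSpace α] {μ : Measure α}
    {f g : α → ℝ≥0∞} (hg : Measurable g) {c : ℝ≥0∞} {B : Set α} (hB : MeasurableSet B)
    (hfg : ∀ x ∉ B, f x ≤ c * g x) {S : Set α} (hS : MeasurableSet S) :
    μ.withDensity f S ≤ c * μ.withDensity g S + μ.withDensity f B := by
  calc μ.withDensity f S ≤ μ.withDensity f (S \ B) + μ.withDensity f B :=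
        (measure_mono (Set.subset_union_left.trans Set.sdiff_union_self.symm.subset)).trans
          (measure_union_le _ _)
    _ ≤ c * μ.withDensity g S + μ.withDensity f B := by
      gcongr
      calc μ.withDensity f (S \ B) = ∫⁻ x in S \ B, f x ∂μ := withDensity_apply _ (hS.diff hB)
        _ ≤ ∫⁻ x in S \ B, c * g x ∂μ := setLIntegral_mono (hg.const_mul c) fun x hx => hfg x hx.2
        _ = c * ∫⁻ x in S \ B, g x ∂μ := lintegral_const_mul c hg
        _ ≤ c * μ.withDensity g S := by
          rw [withDensity_apply _ hS]
          gcongr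
          exact Set.sdiff_subset

theorem pi_withDensity_ofReal {ι α : Type*} [Fintype ι] [MeasurableSpace α] {μ : Measure α}
    [SigmaFinite μ] {f : ι → α → ℝ} (hf : ∀ i, Integrable (f i) μ) (hf0 : ∀ i x, 0 ≤ f i x) :
    Measure.pi (fun i => μ.withDensity fun x => ENNReal.ofReal (f i x)) =
      (Measure.pi fun _ => μ).withDensity fun x => ENNReal.ofReal (∏ i, f i (x i)) := by
  have := fun i => isFiniteMeasure_withDensity_ofReal (hf i).hasFiniteIntegral
  refine Measure.pi_eq fun s hs => ?_
  have hbox : ∀ x : ι → α,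
      (Set.univ.pi s).indicator (fun x => ENNReal.ofReal (∏ i, f i (x i))) x =
        ENNReal.ofReal (∏ i, (s i).indicator (f i) (x i)) := by
    intro x
    by_cases hx : x ∈ Set.univ.pi s
    · rw [Set.indicator_of_mem hx]
      congr 1
      exact Finset.prod_congr rfl fun i _ => (Set.indicator_of_mem (hx i trivial) _).symm
    · obtain ⟨i, -, hi⟩ := not_forall₂.mp hx
      rw [Set.indicator_of_notMem hx, Finset.prod_eq_zero (Finset.mem_univ i)
        (Set.indicator_of_notMem hi _), ENNReal.ofReal_zero]
  have hind0 : ∀ i, 0 ≤ (s i).indicator (f i) := fun i =>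
    Set.indicator_nonneg fun x _ => hf0 i x
  rw [withDensity_apply _ (.univ_pi hs), ← lintegral_indicator (.univ_pi hs),
    lintegral_congr hbox, ← ofReal_integral_eq_lintegral_ofReal
      (.fintype_prod fun i => (hf i).indicator (hs i))
      (ae_of_all _ fun x => Finset.prod_nonneg fun i _ => hind0 i (x i)),
    integral_fintype_prod_eq_prod,
    ENNReal.ofReal_prod_of_nonneg fun i _ => integral_nonneg (hind0 i)]
  refine Finset.prod_congr rfl fun i _ => ?_
  rw [withDensity_apply _ (hs i), integral_indicator (hs i),
    ofReal_integral_eq_lintegral_ofReal (hf i).integrableOn (ae_of_all _ (hf0 i))]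

theorem map_add_mulVec_volume_pi {ι : Type*} [Fintype ι] [DecidableEq ι] (m : ι → ℝ)
    {M : Matrix ι ι ℝ} (hM : M.det ≠ 0) :
    Measure.map (fun x => m + M *ᵥ x) volume = ENNReal.ofReal |M.det|⁻¹ • volume := by
  rw [show (fun x => m + M *ᵥ x) = (m + ·) ∘ toLin' M from rfl,
    ← Measure.map_map (measurable_const_add m)
      (toLin' M).continuous_of_finiteDimensional.measurable,
    Real.map_matrix_volume_pi_eq_smul_volume_pi hM, Measure.map_smul,
    (measurePreserving_add_left volume m).map_eq, abs_inv]

theorem gaussianReal_zero_one_Ioi_eq_gaussQ (x : ℝ) :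
    gaussianReal 0 1 (Set.Ioi x) = ENNReal.ofReal (gaussQ x) := by
  rw [gaussianReal_apply_eq_integral 0 one_ne_zero, gaussQ, ← integral_const_mul]
  simp [gaussianPDFReal]

theorem gaussianReal_Ioi_eq_gaussQ {σ : ℝ} (hσ : 0 < σ) (μ x : ℝ) :
    gaussianReal μ (σ ^ 2).toNNReal (Set.Ioi x) = ENNReal.ofReal (gaussQ ((x - μ) / σ)) := by
  have hmap : (gaussianReal 0 1).map (fun z => μ + σ * z) = gaussianReal μ (σ ^ 2).toNNReal := by
    rw [show (fun z => μ + σ * z) = (μ + ·) ∘ (σ * ·) from rfl,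
      ← Measure.map_map (measurable_const_add μ) (measurable_const_mul σ),
      gaussianReal_map_const_mul, gaussianReal_map_const_add]
    congr 1
    · ring
    · ext; simp [sq_nonneg]
  rw [← hmap, Measure.map_apply (by fun_prop) measurableSet_Ioi,
    ← gaussianReal_zero_one_Ioi_eq_gaussQ]
  congr 1
  ext z
  simp [div_lt_iff₀ hσ, sub_lt_iff_lt_add', mul_comm]

theorem measurable_gaussianPdf {n : ℕ} (m : Fin n → ℝ) (S : Matrix (Fin n) (Fin n) ℝ) :
    Measurable (gaussianPdf m S) := by
  unfold gaussianPdf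
  fun_prop

theorem gaussianPdf_zero_one {n : ℕ} (x : Fin n → ℝ) :
    gaussianPdf 0 1 x = ∏ i, gaussianPDFReal 0 1 (x i) := by
  have h2π : ∀ i ∈ (Finset.univ : Finset (Fin n)), (0 : ℝ) ≤ 2 * Real.pi :=
    fun _ _ => by positivity
  simp only [gaussianPdf, gaussianPDFReal, Finset.prod_mul_distrib, ← Real.exp_sum, det_one,
    inv_one, one_mulVec, sub_zero, mul_one, NNReal.coe_one, Finset.prod_inv_distrib,
    ← Real.sqrt_prod _ h2π, Finset.prod_const, Finset.card_univ, Fintype.card_fin, mul_pow]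
  congr 2
  simp only [dotProduct, Finset.mul_sum, neg_div, Finset.sum_neg_distrib, neg_mul]
  ring_nf

theorem gaussianPdf_add_mulVec {n : ℕ} (m : Fin n → ℝ) {M : Matrix (Fin n) (Fin n) ℝ}
    (hM : M.det ≠ 0) (x : Fin n → ℝ) :
    gaussianPdf m (M * Mᵀ) (m + M *ᵥ x) = |M.det|⁻¹ * gaussianPdf 0 1 x := by
  have hid : Mᵀ * ((M * Mᵀ)⁻¹ * M) = 1 := by
    rw [Matrix.mul_inv_rev, Matrix.mul_assoc, nonsing_inv_mul _ hM.isUnit, Matrix.mul_one,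
      mul_nonsing_inv _ (by rwa [det_transpose, isUnit_iff_ne_zero])]
  have hquad : (M *ᵥ x) ⬝ᵥ (M * Mᵀ)⁻¹ *ᵥ (M *ᵥ x) = x ⬝ᵥ x := by
    rw [mulVec_mulVec, dotProduct_mulVec, ← vecMul_transpose, vecMul_vecMul, hid, vecMul_one]
  have hsqrt : √((2 * Real.pi) ^ n * (M * Mᵀ).det) = √((2 * Real.pi) ^ n) * |M.det| := by
    rw [det_mul, det_transpose, Real.sqrt_mul (by positivity), Real.sqrt_mul_self_eq_abs]
  simp only [gaussianPdf, add_sub_cancel_left, sub_zero, hquad, hsqrt, det_one, mul_one, inv_one,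
    one_mulVec, mul_inv]
  ring

theorem gaussianPdf_eq_exp_mul_gaussianPdf {n : ℕ} {S : Matrix (Fin n) (Fin n) ℝ}
    (hS : S.IsHermitian) (q q' u : Fin n → ℝ) :
    gaussianPdf q S u =
      Real.exp ((q - q') ⬝ᵥ S⁻¹ *ᵥ (u - q) + (q - q') ⬝ᵥ S⁻¹ *ᵥ (q - q') / 2) *
        gaussianPdf q' S u := by
  have hswap : (u - q) ⬝ᵥ S⁻¹ *ᵥ (q - q') = (q - q') ⬝ᵥ S⁻¹ *ᵥ (u - q) := by
    rw [dotProduct_mulVec, ← mulVec_transpose, show (S⁻¹)ᵀ = S⁻¹ by simpa using hS.inv.eq,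
      dotProduct_comm]
  have hquad : (u - q') ⬝ᵥ S⁻¹ *ᵥ (u - q') = (u - q) ⬝ᵥ S⁻¹ *ᵥ (u - q) +
      2 * ((q - q') ⬝ᵥ S⁻¹ *ᵥ (u - q)) + (q - q') ⬝ᵥ S⁻¹ *ᵥ (q - q') := by
    rw [show u - q' = (u - q) + (q - q') by abel, mulVec_add, dotProduct_add, add_dotProduct,
      add_dotProduct, hswap]
    ring
  simp only [gaussianPdf, hquad]
  rw [mul_left_comm, ← Real.exp_add]
  ring_nf

theorem gaussianPdf_le_exp_mul_gaussianPdf {n : ℕ} {S : Matrix (Fin n) (Fin n) ℝ}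
    (hS : S.IsHermitian) {q q' u : Fin n → ℝ} {ε : ℝ}
    (h : (q - q') ⬝ᵥ S⁻¹ *ᵥ (u - q) + (q - q') ⬝ᵥ S⁻¹ *ᵥ (q - q') / 2 ≤ ε) :
    gaussianPdf q S u ≤ Real.exp ε * gaussianPdf q' S u := by
  rw [gaussianPdf_eq_exp_mul_gaussianPdf hS q q']
  exact mul_le_mul_of_nonneg_right (Real.exp_le_exp.mpr h) (by unfold gaussianPdf; positivity)

theorem gaussianMeasure_zero_one {n : ℕ} :
    gaussianMeasure (0 : Fin n → ℝ) 1 = Measure.pi fun _ => gaussianReal 0 1 := by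
  rw [gaussianReal_of_var_ne_zero 0 one_ne_zero]
  unfold gaussianPDF
  rw [pi_withDensity_ofReal (fun _ => integrable_gaussianPDFReal 0 1)
    (fun _ => gaussianPDFReal_nonneg 0 1), ← volume_pi, gaussianMeasure]
  simp_rw [gaussianPdf_zero_one]

theorem map_add_mulVec_gaussianMeasure_zero_one {n : ℕ} (m : Fin n → ℝ)
    {M : Matrix (Fin n) (Fin n) ℝ} (hM : M.det ≠ 0) :
    (gaussianMeasure 0 1).map (fun x => m + M *ᵥ x) = gaussianMeasure m (M * Mᵀ) := by
  have hdet : 0 < |M.det| := abs_pos.mpr hM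
  have hpdf : (fun x => ENNReal.ofReal (gaussianPdf 0 1 x)) =
      (ENNReal.ofReal |M.det| • fun u => ENNReal.ofReal (gaussianPdf m (M * Mᵀ) u)) ∘
        fun x => m + M *ᵥ x := by
    ext x
    rw [Function.comp_apply, Pi.smul_apply, smul_eq_mul, ← ENNReal.ofReal_mul hdet.le,
      gaussianPdf_add_mulVec m hM, mul_inv_cancel_left₀ hdet.ne']
  have hmeas := (measurable_gaussianPdf m (M * Mᵀ)).ennreal_ofReal
  rw [gaussianMeasure, hpdf, map_withDensity_comp (by fun_prop) (hmeas.const_smul _),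
    map_add_mulVec_volume_pi m hM, withDensity_smul_measure, withDensity_smul _ hmeas, smul_smul,
    ← ENNReal.ofReal_mul (inv_nonneg.mpr hdet.le), inv_mul_cancel₀ hdet.ne', ENNReal.ofReal_one,
    one_smul, gaussianMeasure]

open scoped MatrixOrder in
theorem gaussianMeasure_eq_map_multivariateGaussian {n : ℕ} (m : Fin n → ℝ)
    {S : Matrix (Fin n) (Fin n) ℝ} (hS : S.PosDef) :
    gaussianMeasure m S = (multivariateGaussian (WithLp.toLp 2 m) S).map WithLp.ofLp := by
  set L := CFC.sqrt S
  have hLL : L * L = S := CFC.sqrt_mul_sqrt_self S hS.posSemidef.nonneg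
  have hLT : Lᵀ = L := by simpa using (CFC.sqrt_nonneg S).posSemidef.isHermitian.eq
  have hL : L.det ≠ 0 := fun h0 => by
    simpa [← hLL, h0] using hS.det_pos
  rw [multivariateGaussian, ← map_pi_eq_stdGaussian, Measure.map_map (by fun_prop) (by fun_prop),
    Measure.map_map (by fun_prop) (by fun_prop), ← gaussianMeasure_zero_one]
  conv_lhs => rw [← hLL]
  nth_rw 2 [← hLT]
  rw [← map_add_mulVec_gaussianMeasure_zero_one m hL]
  rfl

open scoped RealInnerProductSpace in
theorem map_dotProduct_gaussianMeasure {n : ℕ} (m v : Fin n → ℝ)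
    {S : Matrix (Fin n) (Fin n) ℝ} (hS : S.PosDef) :
    (gaussianMeasure m S).map (v ⬝ᵥ ·) = gaussianReal (v ⬝ᵥ m) (v ⬝ᵥ S *ᵥ v).toNNReal := by
  have hinner : ∀ x : EuclideanSpace ℝ (Fin n), ⟪WithLp.toLp 2 v, x⟫ = v ⬝ᵥ x.ofLp := fun x => by
    simp [PiLp.inner_apply, dotProduct, mul_comm]
  have hcomp : (v ⬝ᵥ ·) ∘ WithLp.ofLp = innerSL ℝ (WithLp.toLp 2 v) := by
    ext x
    exact (hinner x).symm
  rw [gaussianMeasure_eq_map_multivariateGaussian m hS,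
    Measure.map_map (by fun_prop) (by fun_prop), hcomp, IsGaussian.map_eq_gaussianReal,
    ContinuousLinearMap.integral_comp_id_comm IsGaussian.integrable_id,
    integral_id_multivariateGaussian, innerSL_apply_apply, hinner,
    ← covarianceBilin_multivariateGaussian hS.posSemidef,
    covarianceBilin_self IsGaussian.memLp_two_id]
  rfl

theorem gaussianMeasure_setOf_lt_dotProduct_eq_gaussQ {n : ℕ} {S : Matrix (Fin n) (Fin n) ℝ}
    (hS : S.PosDef) (m : Fin n → ℝ) {μ : Fin n → ℝ} (hμ : μ ≠ 0) (t : ℝ) :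
    gaussianMeasure m S {u | t < μ ⬝ᵥ S⁻¹ *ᵥ (u - m)} =
      ENNReal.ofReal (gaussQ (t / √(μ ⬝ᵥ S⁻¹ *ᵥ μ))) := by
  have hpos : 0 < μ ⬝ᵥ S⁻¹ *ᵥ μ := by simpa using hS.inv.dotProduct_mulVec_pos hμ
  set v := μ ᵥ* S⁻¹
  have hset : {u | t < μ ⬝ᵥ S⁻¹ *ᵥ (u - m)} = (v ⬝ᵥ ·) ⁻¹' Set.Ioi (v ⬝ᵥ m + t) := by
    ext u
    simp only [Set.mem_ofPred_eq, Set.mem_preimage, Set.mem_Ioi, dotProduct_mulVec, dotProduct_sub,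
      v, lt_sub_iff_add_lt']
  have hvar : v ⬝ᵥ S *ᵥ v = √(μ ⬝ᵥ S⁻¹ *ᵥ μ) ^ 2 := by
    rw [Real.sq_sqrt hpos.le, dotProduct_mulVec, vecMul_vecMul,
      nonsing_inv_mul _ hS.det_pos.ne'.isUnit, vecMul_one, dotProduct_comm, ← dotProduct_mulVec]
  rw [hset, ← Measure.map_apply (by fun_prop) measurableSet_Ioi,
    map_dotProduct_gaussianMeasure m v hS, hvar,
    gaussianReal_Ioi_eq_gaussQ (Real.sqrt_pos.mpr hpos), add_sub_cancel_left]

theorem gaussian_dp_bound_general {n : ℕ}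
    (Sg : Matrix (Fin n) (Fin n) ℝ) (hSg : Sg.PosDef)
    (q q' : Fin n → ℝ) (hq : q ≠ q') (ε : ℝ) :
    ∀ S : Set (Fin n → ℝ), MeasurableSet S →
      gaussianMeasure q Sg S ≤
        ENNReal.ofReal (Real.exp ε) * gaussianMeasure q' Sg S +
          ENNReal.ofReal (gaussQ
            (ε / Real.sqrt ((q - q') ⬝ᵥ Sg⁻¹ *ᵥ (q - q'))
              - Real.sqrt ((q - q') ⬝ᵥ Sg⁻¹ *ᵥ (q - q')) / 2)) := by
  intro S hS
  set B := {u | ε - (q - q') ⬝ᵥ Sg⁻¹ *ᵥ (q - q') / 2 < (q - q') ⬝ᵥ Sg⁻¹ *ᵥ (u - q)}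
  have hloss : ∀ u ∉ B, ENNReal.ofReal (gaussianPdf q Sg u) ≤
      ENNReal.ofReal (Real.exp ε) * ENNReal.ofReal (gaussianPdf q' Sg u) := fun u hu => by
    rw [← ENNReal.ofReal_mul (Real.exp_nonneg ε)]
    exact ENNReal.ofReal_le_ofReal
      (gaussianPdf_le_exp_mul_gaussianPdf hSg.isHermitian (le_sub_iff_add_le.mp (not_lt.mp hu)))
  calc gaussianMeasure q Sg S
      ≤ ENNReal.ofReal (Real.exp ε) * gaussianMeasure q' Sg S + gaussianMeasure q Sg B :=
        withDensity_apply_le_mul_add (measurable_gaussianPdf q' Sg).ennreal_ofReal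
          (measurableSet_lt measurable_const (by fun_prop)) hloss hS
    _ = _ := by
      rw [gaussianMeasure_setOf_lt_dotProduct_eq_gaussQ hSg q (sub_ne_zero.mpr hq), sub_div,
        div_right_comm, Real.div_sqrt]

theorem gaussian_dp_bound {n : ℕ} (hn : 1 ≤ n)
    (Sg : Matrix (Fin n) (Fin n) ℝ) (hSg : Sg.PosDef)
    (q q' : Fin n → ℝ) (hq : q ≠ q') (ε : ℝ) (hε : 0 ≤ ε) :
    ∀ S : Set (Fin n → ℝ), MeasurableSet S →
      gaussianMeasure q Sg S ≤
        ENNReal.ofReal (Real.exp ε) * gaussianMeasure q' Sg S +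
          ENNReal.ofReal (gaussQ
            (ε / Real.sqrt ((q - q') ⬝ᵥ Sg⁻¹ *ᵥ (q - q'))
              - Real.sqrt ((q - q') ⬝ᵥ Sg⁻¹ *ᵥ (q - q')) / 2)) :=
  gaussian_dp_bound_general Sg hSg q q' hq ε
end

section
/- Let ε₀ > 0, ε > 0, c ∈ ℝ, let M ∈ ℝ^{N×d} be a nonzero matrix, and let S ∈ ℝ^{N×N} be symmetric positive definite. Set b = ε₀²·‖M‖₂² / (−c + √(c² + 2ε)), where ‖M‖₂ is the operator (spectral) norm of M. If S − b·I_N is positive semidefinite, then for all d₁, d₂ ∈ ℝ^d with ‖d₁ − d₂‖ ≤ ε₀ and μ := M(d₁ − d₂) ≠ 0, one has (i) μᵀS⁻¹μ ≤ −c + √(c² + 2ε), and (ii) −(1/2)·μᵀS⁻¹μ + ε/(μᵀS⁻¹μ) ≥ c. -/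
/-!
Writing q = μᵀS⁻¹μ and t = -c + √(c² + 2ε): the matrix inequality S ⪰ bI gives
b·q ≤ |μ|² ≤ ‖M‖₂²ε₀² = b·t, hence (i). Since t is the positive root of q² + 2cq = 2ε,
(i) means q² + 2cq ≤ 2ε, which is (ii) after division by 2q.
-/

open Matrix

/-- The spectral (ℓ²-operator) norm of a real matrix. -/
noncomputable def specNorm {N d : ℕ} (M : Matrix (Fin N) (Fin d) ℝ) : ℝ :=
  ‖LinearMap.toContinuousLinearMap (Matrix.toEuclideanLin M)‖

lemma specNorm_pos {N d : ℕ} {M : Matrix (Fin N) (Fin d) ℝ} (hM : M ≠ 0) : 0 < specNorm M :=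
  norm_pos_iff.2 <| by simpa using hM

lemma norm_toLp_eq_sqrt_dotProduct {n : Type*} [Fintype n] (v : n → ℝ) :
    ‖WithLp.toLp 2 v‖ = √(v ⬝ᵥ v) := by
  simp [EuclideanSpace.norm_eq, dotProduct, sq]

lemma sqrt_dotProduct_mulVec_self_le {N d : ℕ} (M : Matrix (Fin N) (Fin d) ℝ) (v : Fin d → ℝ) :
    √((M *ᵥ v) ⬝ᵥ (M *ᵥ v)) ≤ specNorm M * √(v ⬝ᵥ v) := by
  simpa [specNorm, ← norm_toLp_eq_sqrt_dotProduct] using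
    (LinearMap.toContinuousLinearMap (Matrix.toEuclideanLin M)).le_opNorm (WithLp.toLp 2 v)

lemma mul_dotProduct_inv_mulVec_le {n : Type*} [Fintype n] [DecidableEq n]
    {S : Matrix n n ℝ} (hS : S.PosDef) {b : ℝ} (hSb : (S - b • 1).PosSemidef) (μ : n → ℝ) :
    b * (μ ⬝ᵥ S⁻¹ *ᵥ μ) ≤ μ ⬝ᵥ μ := by
  -- With y = S⁻¹μ and q = μᵀy: b|y|² ≤ yᵀSy = q, and q² ≤ |μ|²|y|² by Cauchy–Schwarz.
  set y := S⁻¹ *ᵥ μ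
  set q := μ ⬝ᵥ y
  have hSy : S *ᵥ y = μ := by
    simp [y, mulVec_mulVec, mul_nonsing_inv S ((isUnit_iff_isUnit_det S).1 hS.isUnit)]
  have hq : 0 ≤ q := by simpa using hS.inv.posSemidef.dotProduct_mulVec_nonneg μ
  have hby : b * (y ⬝ᵥ y) ≤ q := by
    have := hSb.dotProduct_mulVec_nonneg y
    rw [star_trivial, sub_mulVec, smul_mulVec, one_mulVec, dotProduct_sub, dotProduct_smul,
      hSy, dotProduct_comm] at this
    simpa [sub_nonneg] using this
  have hCS : q ^ 2 ≤ (μ ⬝ᵥ μ) * (y ⬝ᵥ y) := by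
    simpa [q, dotProduct, sq] using Finset.sum_mul_sq_le_sq_mul_sq Finset.univ μ y
  have hμμ : 0 ≤ μ ⬝ᵥ μ := dotProduct_self_star_nonneg μ
  rcases le_or_gt b 0 with hb | hb
  · nlinarith
  rcases hq.eq_or_lt with hq0 | hqpos
  · simpa [← hq0] using hμμ
  · refine le_of_mul_le_mul_right ?_ hqpos
    nlinarith [mul_le_mul_of_nonneg_left hby hμμ]

lemma neg_add_sqrt_pos {c ε : ℝ} (hε : 0 < ε) : 0 < -c + √(c ^ 2 + 2 * ε) := by
  have : |c| < √(c ^ 2 + 2 * ε) := Real.lt_sqrt_of_sq_lt (by rw [sq_abs]; linarith)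
  linarith [le_abs_self c]

lemma le_neg_half_mul_add_div_of_le_neg_add_sqrt {c ε q : ℝ} (hε : 0 ≤ ε) (hq : 0 < q)
    (hqt : q ≤ -c + √(c ^ 2 + 2 * ε)) : c ≤ -(1 / 2) * q + ε / q := by
  have hs : √(c ^ 2 + 2 * ε) ^ 2 = c ^ 2 + 2 * ε := Real.sq_sqrt (by positivity)
  have hcs : -c ≤ √(c ^ 2 + 2 * ε) := by
    have : |c| ≤ √(c ^ 2 + 2 * ε) := Real.abs_le_sqrt (by linarith [sq_abs c])
    linarith [neg_le_abs c]
  have hroot : q ^ 2 + 2 * c * q ≤ 2 * ε := by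
    nlinarith [mul_nonneg (sub_nonneg.2 hqt) (by linarith : 0 ≤ q + c + √(c ^ 2 + 2 * ε))]
  rw [← sub_nonneg]
  have : -(1 / 2) * q + ε / q - c = (2 * ε - (q ^ 2 + 2 * c * q)) / (2 * q) := by
    field_simp; ring
  rw [this]
  exact div_nonneg (by linarith) (by linarith)

/-- Theorem 2 of the paper: SDP relaxation preserves the privacy constraint. -/
theorem sdp_relaxation_feasible {N d : ℕ} (ε₀ ε c : ℝ) (hε₀ : 0 < ε₀) (hε : 0 < ε)
    (M : Matrix (Fin N) (Fin d) ℝ) (hM : M ≠ 0)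
    (S : Matrix (Fin N) (Fin N) ℝ) (hS : S.PosDef)
    (hSb : (S - (ε₀ ^ 2 * specNorm M ^ 2 / (-c + Real.sqrt (c ^ 2 + 2 * ε))) •
        (1 : Matrix (Fin N) (Fin N) ℝ)).PosSemidef) :
    ∀ d₁ d₂ : Fin d → ℝ, Real.sqrt ((d₁ - d₂) ⬝ᵥ (d₁ - d₂)) ≤ ε₀ →
      M *ᵥ (d₁ - d₂) ≠ 0 →
      (M *ᵥ (d₁ - d₂)) ⬝ᵥ S⁻¹ *ᵥ (M *ᵥ (d₁ - d₂)) ≤ -c + Real.sqrt (c ^ 2 + 2 * ε) ∧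
      -(1 / 2) * ((M *ᵥ (d₁ - d₂)) ⬝ᵥ S⁻¹ *ᵥ (M *ᵥ (d₁ - d₂))) +
          ε / ((M *ᵥ (d₁ - d₂)) ⬝ᵥ S⁻¹ *ᵥ (M *ᵥ (d₁ - d₂))) ≥ c := by
  intro d₁ d₂ hd hμ
  set μ := M *ᵥ (d₁ - d₂)
  set t := -c + √(c ^ 2 + 2 * ε)
  have ht : 0 < t := neg_add_sqrt_pos hε
  have hnorm := specNorm_pos hM
  have hb : 0 < ε₀ ^ 2 * specNorm M ^ 2 / t := by positivity
  have hμμ : √(μ ⬝ᵥ μ) ≤ specNorm M * ε₀ :=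
    (sqrt_dotProduct_mulVec_self_le M _).trans (mul_le_mul_of_nonneg_left hd hnorm.le)
  have hqt : μ ⬝ᵥ S⁻¹ *ᵥ μ ≤ t := by
    refine le_of_mul_le_mul_left ?_ hb
    calc _ ≤ μ ⬝ᵥ μ := mul_dotProduct_inv_mulVec_le hS hSb μ
      _ ≤ (specNorm M * ε₀) ^ 2 := (Real.sqrt_le_left (by positivity)).1 hμμ
      _ = _ := by field_simp
  have hq : 0 < μ ⬝ᵥ S⁻¹ *ᵥ μ := by simpa using hS.inv.dotProduct_mulVec_pos hμ
  exact ⟨hqt, le_neg_half_mul_add_div_of_le_neg_add_sqrt hε.le hq hqt⟩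
end

section
/- Let Υ, Σ* ∈ ℝ^{N×N} be symmetric positive semidefinite matrices such that S* := Υ + Σ* is positive definite, and let b > 0. Set α = max(1, b/λ_min(S*)), where λ_min(S*) is the smallest eigenvalue of S*, and set Σ' = α·Σ* + (α − 1)·Υ. Then: (i) Σ' is positive semidefinite; (ii) Υ + Σ' − b·I_N is positive semidefinite; (iii) tr(Σ') − tr(Σ*) = (α − 1)·tr(S*). Consequently, the infimum of tr(Σ) over all symmetric positive semidefinite Σ ∈ ℝ^{N×N} with Υ + Σ − b·I_N positive semidefinite is at most tr(Σ*) + (max(1, b/λ_min(S*)) − 1)·tr(S*). -/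
/-!
Since `Σ' = α • Σ* + (α - 1) • Υ` with `α ≥ 1`, it is positive semidefinite, and
`Υ + Σ' - b • 1 = α • (S* - (b / α) • 1)`. The choice `α ≥ b / λ_min(S*)` gives
`b / α ≤ λ_min(S*)`, so every eigenvalue of `S* - (b / α) • 1` is nonnegative. Thus `Σ'` is
feasible for the relaxation, and its trace bounds the infimum, which is taken over traces of
positive semidefinite matrices and hence bounded below by `0`.
-/

open Matrix

theorem div_max_one_div_ciInf_le {ι : Type*} [Finite ι] {f : ι → ℝ} (hf : ∀ i, 0 < f i)
    (b : ℝ) (i : ι) : b / max 1 (b / ⨅ j, f j) ≤ f i := by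
  have : Nonempty ι := ⟨i⟩
  obtain ⟨j, hj⟩ := exists_eq_ciInf_of_finite (f := f)
  set m := ⨅ j, f j
  have hm : 0 < m := hj ▸ hf j
  have hα : 0 < max 1 (b / m) := lt_max_of_lt_left one_pos
  calc b / max 1 (b / m) ≤ m := by
        rw [div_le_iff₀ hα, mul_comm, ← div_le_iff₀ hm]
        exact le_max_right _ _
    _ ≤ f i := Finite.ciInf_le f i

section Hermitian

variable {n 𝕜 : Type*} [RCLike 𝕜]

open scoped ComplexOrder MatrixOrder in
theorem Matrix.IsHermitian.posSemidef_sub_smul_one [Fintype n] [DecidableEq n]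
    {A : Matrix n n 𝕜} (hA : A.IsHermitian) {c : ℝ} (h : ∀ i, c ≤ hA.eigenvalues i) :
    (A - c • (1 : Matrix n n 𝕜)).PosSemidef := by
  rw [← Matrix.le_iff, ← Algebra.algebraMap_eq_smul_one, algebraMap_le_iff_le_spectrum hA,
    hA.spectrum_real_eq_range_eigenvalues]
  rintro _ ⟨i, rfl⟩
  exact h i

open scoped ComplexOrder in
theorem Matrix.PosSemidef.smul_add_sub_one_smul {Υ S : Matrix n n 𝕜} (hΥ : Υ.PosSemidef)
    (hS : S.PosSemidef) {α : ℝ} (hα : 1 ≤ α) : (α • S + (α - 1) • Υ).PosSemidef :=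
  (hS.smul (by linarith)).add (hΥ.smul (by linarith))

theorem add_smul_add_sub_one_smul_sub_smul_one [DecidableEq n] (Υ S : Matrix n n 𝕜)
    {α : ℝ} (hα : α ≠ 0) (b : ℝ) :
    Υ + (α • S + (α - 1) • Υ) - b • (1 : Matrix n n 𝕜) =
      α • (Υ + S - (b / α) • (1 : Matrix n n 𝕜)) := by
  rw [smul_sub, smul_smul, mul_div_cancel₀ _ hα]
  module

end Hermitian

theorem relaxation_gap_bound_general {N : ℕ}
    (Υ Sstar : Matrix (Fin N) (Fin N) ℝ)
    (hΥ : Υ.PosSemidef) (hSstar : Sstar.PosSemidef)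
    (hS : (Υ + Sstar).PosDef) (b : ℝ) :
    let lamMin : ℝ := ⨅ i, hS.1.eigenvalues i
    let α : ℝ := max 1 (b / lamMin)
    let S' : Matrix (Fin N) (Fin N) ℝ := α • Sstar + (α - 1) • Υ
    S'.PosSemidef ∧
    (Υ + S' - b • (1 : Matrix (Fin N) (Fin N) ℝ)).PosSemidef ∧
    S'.trace - Sstar.trace = (α - 1) * (Υ + Sstar).trace ∧
    sInf {t : ℝ | ∃ S'' : Matrix (Fin N) (Fin N) ℝ, S''.PosSemidef ∧
        (Υ + S'' - b • (1 : Matrix (Fin N) (Fin N) ℝ)).PosSemidef ∧ t = S''.trace} ≤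
      Sstar.trace + (α - 1) * (Υ + Sstar).trace := by
  intro lamMin α S'
  have hα : 1 ≤ α := le_max_left _ _
  have hS'_psd : S'.PosSemidef := hΥ.smul_add_sub_one_smul hSstar hα
  have hS'_feasible : (Υ + S' - b • (1 : Matrix (Fin N) (Fin N) ℝ)).PosSemidef := by
    rw [add_smul_add_sub_one_smul_sub_smul_one Υ Sstar (by positivity) b]
    exact (hS.1.posSemidef_sub_smul_one
      (div_max_one_div_ciInf_le hS.eigenvalues_pos b)).smul (by positivity)
  have htrace : S'.trace - Sstar.trace = (α - 1) * (Υ + Sstar).trace := by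
    simp only [S', trace_add, trace_smul, smul_eq_mul]
    ring
  refine ⟨hS'_psd, hS'_feasible, htrace, csInf_le ?_ ⟨S', hS'_psd, hS'_feasible, by linarith⟩⟩
  exact ⟨0, by rintro _ ⟨S'', hS''_psd, -, rfl⟩; exact hS''_psd.trace_nonneg⟩

/-- Proposition 1 of the paper: upper bound on the relaxation gap. -/
theorem relaxation_gap_bound {N : ℕ} (hN : 1 ≤ N)
    (Υ Sstar : Matrix (Fin N) (Fin N) ℝ)
    (hΥ : Υ.PosSemidef) (hSstar : Sstar.PosSemidef)
    (hS : (Υ + Sstar).PosDef) (b : ℝ) (hb : 0 < b) :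
    let lamMin : ℝ := ⨅ i, hS.1.eigenvalues i
    let α : ℝ := max 1 (b / lamMin)
    let S' : Matrix (Fin N) (Fin N) ℝ := α • Sstar + (α - 1) • Υ
    S'.PosSemidef ∧
    (Υ + S' - b • (1 : Matrix (Fin N) (Fin N) ℝ)).PosSemidef ∧
    S'.trace - Sstar.trace = (α - 1) * (Υ + Sstar).trace ∧
    sInf {t : ℝ | ∃ S'' : Matrix (Fin N) (Fin N) ℝ, S''.PosSemidef ∧
        (Υ + S'' - b • (1 : Matrix (Fin N) (Fin N) ℝ)).PosSemidef ∧ t = S''.trace} ≤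
      Sstar.trace + (α - 1) * (Υ + Sstar).trace :=
  relaxation_gap_bound_general Υ Sstar hΥ hSstar hS b
end

section
/- Let M ≥ 1 and for i = 1, …, M let P_i ∈ ℝ^{n×n} be symmetric positive definite, Σ_i ∈ ℝ^{n×n} symmetric positive semidefinite, and w_i ≥ 0 real weights with Σ_{i=1}^M w_i = 1. Then the matrices A := Σ_{i=1}^M w_i (P_i + Σ_i)⁻¹ and B := Σ_{i=1}^M w_i P_i⁻¹ are symmetric positive definite, and, setting P = A⁻¹ and P^{np} = B⁻¹, the identity P − P^{np} = P · ( Σ_{i=1}^M w_i · P_i⁻¹ Σ_i (P_i + Σ_i)⁻¹ ) · P^{np} holds. -/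
/-! The identity is the resolvent identity `A⁻¹ - B⁻¹ = A⁻¹ * (B - A) * B⁻¹`, applied once to
each sensor (`B - A = Σ_i`) and once to the fused information matrices, whose difference is
the weighted sum of the per-sensor differences. -/

open Matrix Finset

namespace Matrix

theorem inv_sub_inv_add {n α : Type*} [Fintype n] [DecidableEq n] [CommRing α]
    {A S : Matrix n n α} (hA : IsUnit A) (hAS : IsUnit (A + S)) : A⁻¹ - (A + S)⁻¹ = A⁻¹ * S * (A + S)⁻¹ := by
  rw [inv_sub_inv (iff_of_true hA hAS), add_sub_cancel_left]

theorem posDef_sum_smul {n ι : Type*} {s : Finset ι} {w : ι → ℝ} {A : ι → Matrix n n ℝ}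
    (hw : ∀ i ∈ s, 0 ≤ w i) (hpos : ∃ i ∈ s, 0 < w i) (hA : ∀ i ∈ s, (A i).PosDef) :
    (∑ i ∈ s, w i • A i).PosDef := by
  classical
  obtain ⟨j, hj, hwj⟩ := hpos
  rw [← add_sum_erase s _ hj]
  refine ((hA j hj).smul hwj).add_posSemidef (posSemidef_sum _ fun i hi => ?_)
  have hi := mem_of_mem_erase hi
  exact (hA i hi).posSemidef.smul (hw i hi)

end Matrix

theorem fusion_accuracy_loss_general {M n : ℕ}
    (P Sg : Fin M → Matrix (Fin n) (Fin n) ℝ) (w : Fin M → ℝ)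
    (hP : ∀ i, (P i).PosDef) (hSg : ∀ i, (Sg i).PosSemidef)
    (hw : ∀ i, 0 ≤ w i) (hwsum : ∑ i, w i = 1) :
    (∑ i, w i • (P i + Sg i)⁻¹).PosDef ∧
    (∑ i, w i • (P i)⁻¹).PosDef ∧
    (∑ i, w i • (P i + Sg i)⁻¹)⁻¹ - (∑ i, w i • (P i)⁻¹)⁻¹ =
      (∑ i, w i • (P i + Sg i)⁻¹)⁻¹ *
        (∑ i, w i • ((P i)⁻¹ * Sg i * (P i + Sg i)⁻¹)) *
          (∑ i, w i • (P i)⁻¹)⁻¹ := by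
  have hPS : ∀ i, (P i + Sg i).PosDef := fun i => (hP i).add_posSemidef (hSg i)
  have hpos : ∃ i ∈ univ, 0 < w i := by
    by_contra! h
    linarith [sum_nonpos h]
  have hA := posDef_sum_smul (fun i _ => hw i) hpos fun i _ => (hPS i).inv
  have hB := posDef_sum_smul (fun i _ => hw i) hpos fun i _ => (hP i).inv
  refine ⟨hA, hB, ?_⟩
  rw [inv_sub_inv (iff_of_true hA.isUnit hB.isUnit), ← sum_sub_distrib]
  simp only [← smul_sub, inv_sub_inv_add (hP _).isUnit (hPS _).isUnit]

/-- Proposition 2 of the paper: estimation accuracy loss. -/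
theorem fusion_accuracy_loss {M n : ℕ} (hM : 1 ≤ M)
    (P Sg : Fin M → Matrix (Fin n) (Fin n) ℝ) (w : Fin M → ℝ)
    (hP : ∀ i, (P i).PosDef) (hSg : ∀ i, (Sg i).PosSemidef)
    (hw : ∀ i, 0 ≤ w i) (hwsum : ∑ i, w i = 1) :
    (∑ i, w i • (P i + Sg i)⁻¹).PosDef ∧
    (∑ i, w i • (P i)⁻¹).PosDef ∧
    (∑ i, w i • (P i + Sg i)⁻¹)⁻¹ - (∑ i, w i • (P i)⁻¹)⁻¹ =
      (∑ i, w i • (P i + Sg i)⁻¹)⁻¹ *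
        (∑ i, w i • ((P i)⁻¹ * Sg i * (P i + Sg i)⁻¹)) *
          (∑ i, w i • (P i)⁻¹)⁻¹ :=
  fusion_accuracy_loss_general P Sg w hP hSg hw hwsum
end
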